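/- Let A₁ and A₂ be symmetric positive definite linear maps on Euclidean spaces X and Y respectively, and let M : X → Y be a bounded linear operator. If ‖A₂^{−1/2} M A₁^{−1/2}‖ < 1, then the block operator A on X × Y given by A(x, y) = (A₁x + M*y, Mx + A₂y) is positive definite. -/

import Mathlib

open Filter Topology Set
open scoped InnerProductSpace RealInnerProductSpace Pointwise

noncomputable section

/-- The inertial parameter condition on the extrapolation parameters `αs` and the
relaxation parameters `ρs`. -/
def InertialCond (αs ρs : ℕ → ℝ) : Prop :=
  ∃ α ρ θ δ : ℝ,
    Monotone αs ∧ αs 1 = 0 ∧ (∀ k, 1 ≤ k → 0 ≤ αs k ∧ αs k ≤ α) ∧ 0 ≤ α ∧ α < 1 ∧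
    0 < ρ ∧ 0 < θ ∧ 0 < δ ∧
    (α ^ 2 * (1 + α) + α * θ) / (1 - α ^ 2) < δ ∧
    (∀ k, 1 ≤ k → ρ ≤ ρs k ∧
      ρs k < (δ - α * (α * (1 + α) + α * δ + θ)) / (δ * (1 + α * (1 + α) + α * δ + θ)))

variable {H : Type*} [NormedAddCommGroup H] [InnerProductSpace ℝ H]

/-- `g` is a proper, lower semicontinuous, convex function with values in `(-∞, +∞]`. -/
def Gamma0 (g : H → EReal) : Prop :=
  (∃ x, g x ≠ ⊤) ∧ (∀ x, g x ≠ ⊥) ∧ LowerSemicontinuous g ∧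
  ∀ x y : H, ∀ a b : ℝ, 0 ≤ a → 0 ≤ b → a + b = 1 →
    g (a • x + b • y) ≤ (a : EReal) * g x + (b : EReal) * g y

/-- The Legendre–Fenchel conjugate of `h`. -/
def fenchel (h : H → EReal) (y : H) : EReal :=
  ⨆ x : H, ((⟪y, x⟫_ℝ : ℝ) : EReal) - h x

/-- `p = prox_{τ g}(u)`, i.e. `p` minimizes `w ↦ g w + ‖u - w‖² / (2τ)`. -/
def IsProx (g : H → EReal) (τ : ℝ) (u p : H) : Prop :=
  ∀ w, g p + ((1 / (2 * τ) * ‖u - p‖ ^ 2 : ℝ) : EReal) ≤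
    g w + ((1 / (2 * τ) * ‖u - w‖ ^ 2 : ℝ) : EReal)

/-- `p = prox_{S g}(u)` for a positive definite map `S` with inverse `Sinv`, i.e. `p`
minimizes `w ↦ g w + (1/2) ⟪S⁻¹ (u - w), u - w⟫`. -/
def IsProxOp (g : H → EReal) (Sinv : H →L[ℝ] H) (u p : H) : Prop :=
  ∀ w, g p + ((1 / 2 * ⟪Sinv (u - p), u - p⟫_ℝ : ℝ) : EReal) ≤
    g w + ((1 / 2 * ⟪Sinv (u - w), u - w⟫_ℝ : ℝ) : EReal)

/-- `B` is cocoercive with respect to `Linv = L⁻¹`. -/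
def CocoerciveWrt (B : H → H) (Linv : H →L[ℝ] H) : Prop :=
  ∀ x y : H, ⟪Linv (B x - B y), B x - B y⟫_ℝ ≤ ⟪B x - B y, x - y⟫_ℝ

/-- `L` is a selfadjoint positive definite (bounded linear) map. -/
def PosDefSA (L : H →L[ℝ] H) : Prop :=
  (∀ x y : H, ⟪L x, y⟫_ℝ = ⟪x, L y⟫_ℝ) ∧ ∀ x : H, x ≠ 0 → 0 < ⟪L x, x⟫_ℝ

/-- `Linv` is a two-sided inverse of `L`. -/
def InvPair (L Linv : H →L[ℝ] H) : Prop :=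
  (∀ x, L (Linv x) = x) ∧ (∀ x, Linv (L x) = x)

/-- The subdifferential of an extended-real-valued convex function. -/
def subdiff (g : H → EReal) (x : H) : Set H :=
  {u | ∀ z, g x + ((⟪u, z - x⟫_ℝ : ℝ) : EReal) ≤ g z}

/-- The diagonal operator on `EuclideanSpace ℝ (Fin q)` with diagonal entries `t`. -/
def diagOp {q : ℕ} (t : Fin q → ℝ) :
    EuclideanSpace ℝ (Fin q) →L[ℝ] EuclideanSpace ℝ (Fin q) :=
  LinearMap.toContinuousLinearMap
  { toFun := fun x => WithLp.toLp 2 (fun i => t i * x i)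
    map_add' := by intro x y; ext i; simp [mul_add]
    map_smul' := by intro c x; ext i; simp [smul_eq_mul]; ring }

/-- The positive semidefinite square root of a positive semidefinite matrix
(the definition of the older Mathlib, removed since). -/
def Matrix.PosSemidef.sqrt {𝕜 n : Type*} [RCLike 𝕜] [PartialOrder 𝕜] [StarOrderedRing 𝕜]
    [Fintype n] [DecidableEq n]
    {A : Matrix n n 𝕜} (hA : A.PosSemidef) : Matrix n n 𝕜 :=
  (hA.1.eigenvectorUnitary : Matrix n n 𝕜) *
    Matrix.diagonal ((↑) ∘ (Real.sqrt ∘ hA.1.eigenvalues)) *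
    (star (hA.1.eigenvectorUnitary : Matrix n n 𝕜))

end

/-!
Let `Sᵢ = Aᵢ^{1/2}` and `N = S₂⁻¹ M S₁⁻¹`. With `D = diag(S₁, S₂)`, which is invertible, the block
matrix is the congruence `Dᵀ [[1, Nᵀ], [N, 1]] D`, so it suffices that `[[1, Nᵀ], [N, 1]]` is
positive definite. Its quadratic form at `(u, v)` is
`‖u‖² + ‖v‖² + 2⟪v, N u⟫ ≥ (1 - ‖N‖)(‖u‖² + ‖v‖²) + ‖N‖(‖u‖ - ‖v‖)²`,
which is positive for `(u, v) ≠ 0` as soon as `‖N‖ < 1`.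
-/

open Matrix

section Sqrt

/- `Matrix.PosSemidef.sqrt` allows any star-ordered order on `𝕜`, but the eigenvalues of a
positive semidefinite matrix are known to be nonnegative only for the `RCLike` order. -/
open scoped ComplexOrder

variable {𝕜 n : Type*} [RCLike 𝕜] [Fintype n] [DecidableEq n] {A : Matrix n n 𝕜}

theorem Matrix.PosSemidef.isHermitian_sqrt (hA : A.PosSemidef) : hA.sqrt.IsHermitian := by
  refine (PosSemidef.mul_mul_conjTranspose_same (PosSemidef.diagonal fun i => ?_) _).isHermitian
  simp

theorem Matrix.PosSemidef.sqrt_mul_self (hA : A.PosSemidef) : hA.sqrt * hA.sqrt = A := by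
  set U : Matrix n n 𝕜 := ↑hA.1.eigenvectorUnitary
  set d : n → 𝕜 := (↑) ∘ (Real.sqrt ∘ hA.1.eigenvalues)
  have hU : star U * U = 1 := Unitary.coe_star_mul_self _
  have hd : diagonal d * diagonal d = diagonal ((↑) ∘ hA.1.eigenvalues) := by
    rw [diagonal_mul_diagonal]
    congr with i
    simp only [d, Function.comp_apply, ← RCLike.ofReal_mul,
      Real.mul_self_sqrt (hA.eigenvalues_nonneg i)]
  conv_rhs => rw [hA.1.spectral_theorem, Unitary.conjStarAlgAut_apply]
  calc hA.sqrt * hA.sqrt = U * (diagonal d * (star U * U) * diagonal d) * star U := by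
        simp only [sqrt, U, d, Matrix.mul_assoc]
    _ = _ := by rw [hU, Matrix.mul_one, hd]

theorem Matrix.PosDef.isUnit_sqrt (hA : A.PosDef) : IsUnit hA.posSemidef.sqrt :=
  isUnit_of_mul_isUnit_left (hA.posSemidef.sqrt_mul_self ▸ hA.isUnit)

end Sqrt

theorem ContinuousLinearMap.norm_sq_add_norm_sq_add_two_inner_apply_pos
    {E F : Type*} [NormedAddCommGroup E] [InnerProductSpace ℝ E]
    [NormedAddCommGroup F] [InnerProductSpace ℝ F] {T : E →L[ℝ] F} (hT : ‖T‖ < 1)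
    {u : E} {v : F} (huv : u ≠ 0 ∨ v ≠ 0) : 0 < ‖u‖ ^ 2 + ‖v‖ ^ 2 + 2 * ⟪v, T u⟫_ℝ := by
  have hinner : -(‖v‖ * (‖T‖ * ‖u‖)) ≤ ⟪v, T u⟫_ℝ :=
    calc -(‖v‖ * (‖T‖ * ‖u‖)) ≤ -(‖v‖ * ‖T u‖) := by gcongr; exact T.le_opNorm u
      _ ≤ ⟪v, T u⟫_ℝ := neg_le_of_abs_le (abs_real_inner_le_norm v (T u))
  have hpos : 0 < ‖u‖ ^ 2 + ‖v‖ ^ 2 := by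
    rcases huv with hu | hv
    · have := norm_pos_iff.mpr hu; positivity
    · have := norm_pos_iff.mpr hv; positivity
  nlinarith [mul_pos (sub_pos.mpr hT) hpos, mul_nonneg (norm_nonneg T) (sq_nonneg (‖u‖ - ‖v‖))]

theorem Matrix.posDef_fromBlocks_one_of_norm_lt_one {m n : Type*} [Fintype m] [Fintype n]
    [DecidableEq m] [DecidableEq n] (N : Matrix m n ℝ)
    (hN : ‖LinearMap.toContinuousLinearMap (toEuclideanLin N)‖ < 1) :
    (fromBlocks 1 Nᵀ N 1).PosDef := by
  refine .of_dotProduct_mulVec_pos (isHermitian_one.fromBlocks (by simp) isHermitian_one)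
    fun x hx => ?_
  obtain ⟨u, v, rfl⟩ : ∃ u v, x = Sum.elim u v := ⟨_, _, (Sum.elim_comp_inl_inr x).symm⟩
  have hform : star (Sum.elim u v) ⬝ᵥ (fromBlocks 1 Nᵀ N 1 *ᵥ Sum.elim u v) =
      ‖WithLp.toLp 2 u‖ ^ 2 + ‖WithLp.toLp 2 v‖ ^ 2 +
        2 * ⟪WithLp.toLp 2 v,
          LinearMap.toContinuousLinearMap (toEuclideanLin N) (WithLp.toLp 2 u)⟫_ℝ := by
    simp only [← real_inner_self_eq_norm_sq, EuclideanSpace.inner_eq_star_dotProduct,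
      LinearMap.coe_toContinuousLinearMap', ofLp_toLpLin, toLin'_apply, star_trivial,
      fromBlocks_mulVec, Sum.elim_comp_inl, Sum.elim_comp_inr, one_mulVec,
      sumElim_dotProduct_sumElim, dotProduct_add, mulVec_transpose, dotProduct_comm (N *ᵥ u) v,
      dotProduct_mulVec v N u, dotProduct_comm u (v ᵥ* N)]
    ring
  rw [hform]
  refine ContinuousLinearMap.norm_sq_add_norm_sq_add_two_inner_apply_pos hN ?_
  contrapose! hx
  simp_all

theorem Matrix.transpose_fromBlocks_zero_zero_mul_fromBlocks_one_mul {l m α : Type*}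
    [Fintype l] [Fintype m] [DecidableEq l] [DecidableEq m] [CommSemiring α]
    (S₁ : Matrix l l α) (S₂ : Matrix m m α) (N : Matrix m l α) :
    (fromBlocks S₁ 0 0 S₂)ᵀ * fromBlocks 1 Nᵀ N 1 * fromBlocks S₁ 0 0 S₂ =
      fromBlocks (S₁ᵀ * S₁) (S₂ᵀ * N * S₁)ᵀ (S₂ᵀ * N * S₁) (S₂ᵀ * S₂) := by
  simp [fromBlocks_transpose, fromBlocks_multiply, Matrix.mul_assoc]

theorem Matrix.posDef_fromBlocks_mul_self_of_posDef_fromBlocks_one {l m : Type*}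
    [Fintype l] [Fintype m] [DecidableEq l] [DecidableEq m]
    {S₁ : Matrix l l ℝ} {S₂ : Matrix m m ℝ} (hS₁ : S₁.IsSymm) (hS₂ : S₂.IsSymm)
    (hS₁_unit : IsUnit S₁) (hS₂_unit : IsUnit S₂) (M : Matrix m l ℝ)
    (h : (fromBlocks 1 (S₂⁻¹ * M * S₁⁻¹)ᵀ (S₂⁻¹ * M * S₁⁻¹) 1).PosDef) :
    (fromBlocks (S₁ * S₁) Mᵀ M (S₂ * S₂)).PosDef := by
  have hM : S₂ᵀ * (S₂⁻¹ * M * S₁⁻¹) * S₁ = M := by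
    rw [hS₂.eq, ← Matrix.mul_assoc S₂,
      mul_nonsing_inv_cancel_left (h := (isUnit_iff_isUnit_det _).mp hS₂_unit),
      nonsing_inv_mul_cancel_right (h := (isUnit_iff_isUnit_det _).mp hS₁_unit)]
  have hD : IsUnit (fromBlocks S₁ 0 0 S₂) := isUnit_fromBlocks_zero₂₁.mpr ⟨hS₁_unit, hS₂_unit⟩
  rwa [← hD.posDef_star_left_conjugate_iff, star_eq_conjTranspose,
    conjTranspose_eq_transpose_of_trivial, transpose_fromBlocks_zero_zero_mul_fromBlocks_one_mul,
    hM, hS₁.eq, hS₂.eq] at h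

theorem fromBlocks_posDef_of_opNorm_lt_one
    {n m : ℕ}
    (A₁ : Matrix (Fin n) (Fin n) ℝ) (A₂ : Matrix (Fin m) (Fin m) ℝ)
    (M : Matrix (Fin m) (Fin n) ℝ)
    (hA₁ : A₁.PosDef) (hA₂ : A₂.PosDef)
    (hnorm : ‖LinearMap.toContinuousLinearMap
        (Matrix.toEuclideanLin
          ((hA₂.posSemidef.sqrt)⁻¹ * M * (hA₁.posSemidef.sqrt)⁻¹))‖ < 1) :
    (Matrix.fromBlocks A₁ M.transpose M A₂).PosDef := by
  have h := posDef_fromBlocks_mul_self_of_posDef_fromBlocks_one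
    (isHermitian_iff_isSymm.mp hA₁.posSemidef.isHermitian_sqrt)
    (isHermitian_iff_isSymm.mp hA₂.posSemidef.isHermitian_sqrt) hA₁.isUnit_sqrt
    hA₂.isUnit_sqrt M (posDef_fromBlocks_one_of_norm_lt_one _ hnorm)
  rwa [hA₁.posSemidef.sqrt_mul_self, hA₂.posSemidef.sqrt_mul_self] at h
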